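/- The coded family S = {H_a | a ∈ I} is an effective Borel σ-algebra on ℕ: there exist computable functions u₁, u₂, u₃ : ℕ → ℕ such that (a) for all i: u₁(i) ∈ I and H_{u₁(i)} = {i}; (b) for all a ∈ I: u₂(a) ∈ I and H_{u₂(a)} = ℕ \ H_a; and (c) for all e such that φ_e(i) is defined and φ_e(i) ∈ I for every i: u₃(e) ∈ I and H_{u₃(e)} = ⋃_{i ∈ ℕ} H_{φ_e(i)}. -/

import Mathlib

noncomputable section

/-- The `e`-th partial recursive function `ℕ ⇀ ℕ`. -/
def phi (e : ℕ) : ℕ →. ℕ := (Denumerable.ofNat Nat.Partrec.Code e).eval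

/-- The monotone operator `Ψ₀`. -/
def Psi0 : Set ℕ →o Set ℕ where
  toFun J := {a | (∃ e, a = Nat.pair 0 e) ∨
    ∃ e, a = Nat.pair 1 e ∧ ∀ k, ∃ v ∈ phi e k, v ∈ J}
  monotone' := by
    intro J J' hJ a ha
    rcases ha with ⟨e, he⟩ | ⟨e, he, hk⟩
    · exact Or.inl ⟨e, he⟩
    · refine Or.inr ⟨e, he, fun k => ?_⟩
      obtain ⟨v, hv, hvJ⟩ := hk k
      exact ⟨v, hv, hJ hvJ⟩

/-- `I`, the least fixed point of `Ψ₀`. -/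
def Iset : Set ℕ := OrderHom.lfp Psi0

/-- The transfinite stages `I_ξ`. -/
def Istage : Ordinal → Set ℕ :=
  WellFounded.fix Ordinal.lt_wf fun ξ ih =>
    if ξ = 0 then {a | ∃ e, a = Nat.pair 0 e}
    else {a | ∃ e, a = Nat.pair 1 e ∧
      ∀ k, ∃ v ∈ phi e k, ∃ η, ∃ hη : η < ξ, v ∈ ih η hη}

/-- The norm `‖a‖` of `a ∈ I`: the least ordinal `ξ` with `a ∈ I_ξ`. -/
def Inorm (a : ℕ) : Ordinal := sInf {ξ | a ∈ Istage ξ}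

/-- The monotone operator `Ψ₁`. -/
def Psi1 : Set (ℕ × ℕ) →o Set (ℕ × ℕ) where
  toFun A := {p | (∃ e, p.1 = Nat.pair 0 e ∧ p.2 = e) ∨
    ∃ e, p.1 = Nat.pair 1 e ∧ ∃ t, ∀ s, ∃ v ∈ phi e (Nat.pair t s), (v, p.2) ∈ A}
  monotone' := by
    intro A A' hA p hp
    rcases hp with ⟨e, he, hx⟩ | ⟨e, he, t, ht⟩
    · exact Or.inl ⟨e, he, hx⟩
    · refine Or.inr ⟨e, he, t, fun s => ?_⟩
      obtain ⟨v, hv, hvA⟩ := ht s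
      exact ⟨v, hv, hA hvA⟩

/-- `Hp`, the least fixed point of `Ψ₁`. -/
def Hp : Set (ℕ × ℕ) := OrderHom.lfp Psi1

/-- `H_a`, the `a`-section of `Hp`. -/
def Hset (a : ℕ) : Set ℕ := {x | (a, x) ∈ Hp}

/-- The monotone operator `Φ_ψ` associated with the positive formula `ψ`. -/
def PhiPsi : Set ℕ →o Set ℕ where
  toFun R := {y | ∃ a x e, y = Nat.pair a x ∧
    ((a = Nat.pair 0 e ∧ x = e) ∨
     (a = Nat.pair 1 e ∧ ∃ t, ∀ s, ∃ v ∈ phi e (Nat.pair t s), Nat.pair v x ∈ R))}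
  monotone' := by
    intro R R' hR y hy
    obtain ⟨a, x, e, hy, hcase⟩ := hy
    refine ⟨a, x, e, hy, ?_⟩
    rcases hcase with h | ⟨he, t, ht⟩
    · exact Or.inl h
    · refine Or.inr ⟨he, t, fun s => ?_⟩
      obtain ⟨v, hv, hvR⟩ := ht s
      exact ⟨v, hv, hR hvR⟩

/-!
A code `⟨0, e⟩` names `{e}` and a code `⟨1, e⟩` names `⋃ t, ⋂ s, H (φ_e ⟨t, s⟩)`, so by the
s-m-n theorem a computable sequence of codes can be turned into a code of its union (or of its
intersection) by letting `φ` ignore the second (or first) coordinate. Complements are defined by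
recursion on codes: `{e}ᶜ` is a union of singletons, and by De Morgan the complement of
`⋃ t, ⋂ s, H (φ_e ⟨t, s⟩)` is `⋂ t, ⋃ s` of the complements. Kleene's recursion theorem makes
this self-referential definition computable, and induction along the least fixed point `I`
shows that it is correct.
-/

open Nat.Partrec (Code)
open Nat.Partrec.Code Encodable

theorem partrec₂_phi : Partrec₂ phi :=
  eval_part.comp ((Computable.ofNat Code).comp Computable.fst) Computable.snd

theorem exists_computable_phi_eq {α : Type*} [Primcodable α] {f : α → ℕ →. ℕ}
    (hf : Partrec₂ f) : ∃ g : α → ℕ, Computable g ∧ ∀ a k, phi (g a) k = f a k := by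
  obtain ⟨c, hc⟩ := exists_code.1 hf
  refine ⟨fun a => encode (curry c (encode a)),
    (Primrec.encode.comp (primrec₂_curry.comp (Primrec.const c) Primrec.encode)).to_comp,
    fun a k => ?_⟩
  simp [phi, hc, Part.map_id']

theorem exists_phi_eq_some_self {F : ℕ → ℕ → ℕ} (hF : Computable₂ F) :
    ∃ c, ∀ n, phi c n = Part.some (F c n) := by
  obtain ⟨c, hc⟩ := fixed_point₂ (f := fun c n => Part.some (F (encode c) n))
    (hF.comp (Computable.encode.comp Computable.fst) Computable.snd).partrec
  exact ⟨encode c, fun n => by simp [phi, hc]⟩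

theorem mem_Iset_iff {a : ℕ} : a ∈ Iset ↔ (∃ e, a = Nat.pair 0 e) ∨
    ∃ e, a = Nat.pair 1 e ∧ ∀ k, ∃ v ∈ phi e k, v ∈ Iset :=
  (Set.ext_iff.1 (OrderHom.map_lfp Psi0) a).symm

theorem mem_Hp_iff {a x : ℕ} : (a, x) ∈ Hp ↔ (∃ e, a = Nat.pair 0 e ∧ x = e) ∨
    ∃ e, a = Nat.pair 1 e ∧ ∃ t, ∀ s, ∃ v ∈ phi e (Nat.pair t s), (v, x) ∈ Hp :=
  (Set.ext_iff.1 (OrderHom.map_lfp Psi1) (a, x)).symm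

theorem pair_zero_mem_Iset (e : ℕ) : Nat.pair 0 e ∈ Iset :=
  mem_Iset_iff.2 (Or.inl ⟨e, rfl⟩)

theorem pair_one_mem_Iset {e : ℕ} (h : ∀ k, ∃ v ∈ phi e k, v ∈ Iset) :
    Nat.pair 1 e ∈ Iset :=
  mem_Iset_iff.2 (Or.inr ⟨e, rfl, h⟩)

theorem Hset_pair_zero (e : ℕ) : Hset (Nat.pair 0 e) = {e} := by
  ext x
  change (_, x) ∈ Hp ↔ _
  rw [mem_Hp_iff]
  simp [Nat.pair_eq_pair, eq_comm]

theorem Hset_pair_one (e : ℕ) :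
    Hset (Nat.pair 1 e) = {x | ∃ t, ∀ s, ∃ v ∈ phi e (Nat.pair t s), x ∈ Hset v} := by
  ext x
  change (_, x) ∈ Hp ↔ _
  rw [mem_Hp_iff]
  simp [Nat.pair_eq_pair, Hset]

theorem Iset_induction {P : ℕ → Prop} (zero : ∀ e, P (Nat.pair 0 e))
    (one : ∀ e, (∀ k, ∃ v ∈ phi e k, v ∈ Iset ∧ P v) → P (Nat.pair 1 e)) :
    ∀ a ∈ Iset, P a := by
  suffices Iset ⊆ {a | a ∈ Iset ∧ P a} from fun a ha => (this ha).2
  refine OrderHom.lfp_le Psi0 ?_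
  rintro a (⟨e, rfl⟩ | ⟨e, rfl, hk⟩)
  · exact ⟨pair_zero_mem_Iset e, zero e⟩
  · refine ⟨pair_one_mem_Iset fun k => ?_, one e hk⟩
    obtain ⟨v, hv, hvI, -⟩ := hk k
    exact ⟨v, hv, hvI⟩

theorem exists_computable_iUnion : ∃ U : ℕ → ℕ, Computable U ∧ ∀ e,
    Hset (U e) = {x | ∃ i, ∃ v ∈ phi e i, x ∈ Hset v} ∧
      ((∀ i, ∃ v ∈ phi e i, v ∈ Iset) → U e ∈ Iset) := by
  obtain ⟨g, hg, hphi⟩ := exists_computable_phi_eq (f := fun e k => phi e k.unpair.1)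
    (partrec₂_phi.comp Computable.fst (Computable.fst.comp (Computable.unpair.comp Computable.snd)))
  refine ⟨fun e => Nat.pair 1 (g e), Primrec₂.natPair.to_comp.comp (Computable.const 1) hg,
    fun e => ⟨?_, fun h => pair_one_mem_Iset fun k => by simpa [hphi] using h k.unpair.1⟩⟩
  ext x
  simp [Hset_pair_one, hphi]

theorem exists_computable_iInter : ∃ N : ℕ → ℕ, Computable N ∧ ∀ e,
    Hset (N e) = {x | ∀ i, ∃ v ∈ phi e i, x ∈ Hset v} ∧
      ((∀ i, ∃ v ∈ phi e i, v ∈ Iset) → N e ∈ Iset) := by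
  obtain ⟨g, hg, hphi⟩ := exists_computable_phi_eq (f := fun e k => phi e k.unpair.2)
    (partrec₂_phi.comp Computable.fst (Computable.snd.comp (Computable.unpair.comp Computable.snd)))
  refine ⟨fun e => Nat.pair 1 (g e), Primrec₂.natPair.to_comp.comp (Computable.const 1) hg,
    fun e => ⟨?_, fun h => pair_one_mem_Iset fun k => by simpa [hphi] using h k.unpair.2⟩⟩
  ext x
  simp [Hset_pair_one, hphi]

theorem exists_computable_compl_singleton :
    ∃ C : ℕ → ℕ, Computable C ∧ ∀ e, C e ∈ Iset ∧ Hset (C e) = {e}ᶜ := by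
  obtain ⟨U, hU, hUH⟩ := exists_computable_iUnion
  -- `i ↦ if i = e then e + 1 else i` enumerates `{e}ᶜ`
  obtain ⟨g, hg, hphi⟩ := exists_computable_phi_eq
    (f := fun e i => Part.some (Nat.pair 0 (if i = e then e + 1 else i)))
    (Primrec₂.natPair.comp (Primrec.const 0) (Primrec.ite (Primrec.eq.comp Primrec.snd Primrec.fst)
      (Primrec.succ.comp Primrec.fst) Primrec.snd)).to_comp.partrec
  refine ⟨fun e => U (g e), hU.comp hg,
    fun e => ⟨(hUH (g e)).2 fun i => by simp [hphi, pair_zero_mem_Iset], ?_⟩⟩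
  ext x
  simp only [(hUH (g e)).1, hphi, Part.mem_some_iff, exists_eq_left, Hset_pair_zero,
    Set.mem_singleton_iff, Set.mem_ofPred_eq, Set.mem_compl_iff]
  constructor
  · rintro ⟨i, rfl⟩
    split_ifs <;> omega
  · exact fun hx => ⟨x, (if_neg hx).symm⟩

theorem exists_computable_iInter_iUnion_comp : ∃ D : ℕ → ℕ → ℕ, Computable₂ D ∧ ∀ c e,
    Hset (D c e) =
        {x | ∀ t, ∃ s, ∃ w ∈ (phi e (Nat.pair t s)).bind fun v => phi c v, x ∈ Hset w} ∧
      ((∀ k, ∃ w ∈ (phi e k).bind fun v => phi c v, w ∈ Iset) → D c e ∈ Iset) := by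
  obtain ⟨U, hU, hUH⟩ := exists_computable_iUnion
  obtain ⟨N, hN, hNH⟩ := exists_computable_iInter
  obtain ⟨K, hK, hphiK⟩ := exists_computable_phi_eq (α := ℕ × ℕ × ℕ)
    (f := fun p s => (phi p.2.1 (Nat.pair p.2.2 s)).bind fun v => phi p.1 v)
    ((partrec₂_phi.comp (Computable.fst.comp (Computable.snd.comp Computable.fst))
      (Primrec₂.natPair.to_comp.comp (Computable.snd.comp (Computable.snd.comp Computable.fst))
        Computable.snd)).bind
      (partrec₂_phi.comp (Computable.fst.comp (Computable.fst.comp Computable.fst))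
        Computable.snd).to₂)
  obtain ⟨G, hG, hphiG⟩ := exists_computable_phi_eq (α := ℕ × ℕ)
    (f := fun p t => Part.some (U (K (p.1, p.2, t))))
    (hU.comp (hK.comp ((Computable.fst.comp Computable.fst).pair
      ((Computable.snd.comp Computable.fst).pair Computable.snd)))).partrec
  refine ⟨fun c e => N (G (c, e)), hN.comp (hG.comp (Computable.fst.pair Computable.snd)),
    fun c e => ⟨?_, fun h => (hNH _).2 fun t => ?_⟩⟩
  · ext x
    simp [(hNH _).1, hphiG, (hUH _).1, hphiK]
  · simpa [hphiG] using (hUH _).2 fun s => by simpa [hphiK] using h (Nat.pair t s)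

theorem exists_computable_compl :
    ∃ u : ℕ → ℕ, Computable u ∧ ∀ a ∈ Iset, u a ∈ Iset ∧ Hset (u a) = (Hset a)ᶜ := by
  obtain ⟨C, hC, hCH⟩ := exists_computable_compl_singleton
  obtain ⟨D, hD, hDH⟩ := exists_computable_iInter_iUnion_comp
  set F : ℕ → ℕ → ℕ := fun c a => if a.unpair.1 = 0 then C a.unpair.2 else D c a.unpair.2
  have hF : Computable₂ F := by
    have hsnd : Computable fun p : ℕ × ℕ => p.2.unpair.2 :=
      Computable.snd.comp (Computable.unpair.comp Computable.snd)
    have hzero : Computable fun p : ℕ × ℕ => decide (p.2.unpair.1 = 0) :=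
      (PrimrecPred.decide (Primrec.eq.comp
        (Primrec.fst.comp (Primrec.unpair.comp Primrec.snd)) (Primrec.const 0))).to_comp
    refine (Computable.cond hzero (hC.comp hsnd) (hD.comp Computable.fst hsnd)).of_eq fun p => ?_
    simp [F]
  obtain ⟨c, hc⟩ := exists_phi_eq_some_self hF
  refine ⟨F c, hF.comp (Computable.const c) Computable.id,
    Iset_induction (fun e => ?_) (fun e IH => ?_)⟩
  · simpa [F, Hset_pair_zero] using hCH e
  choose V hV using IH
  have hphiV : ∀ k, phi e k = Part.some (V k) := fun k => Part.eq_some_iff.2 (hV k).1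
  have hFe : F c (Nat.pair 1 e) = D c e := by simp [F]
  rw [hFe, Set.ext_iff]
  refine ⟨(hDH c e).2 fun k => by simp [hphiV, hc, (hV k).2.2.1], fun x => ?_⟩
  simp [(hDH c e).1, Hset_pair_one, hphiV, hc, (hV _).2.2.2]

/-- The coded family `S = {H_a | a ∈ I}` is an effective Borel σ-algebra on `ℕ`. -/
theorem effective_sigma_algebra :
    ∃ u₁ u₂ u₃ : ℕ → ℕ, Computable u₁ ∧ Computable u₂ ∧ Computable u₃ ∧
      (∀ i : ℕ, u₁ i ∈ Iset ∧ Hset (u₁ i) = {i}) ∧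
      (∀ a ∈ Iset, u₂ a ∈ Iset ∧ Hset (u₂ a) = (Hset a)ᶜ) ∧
      (∀ e : ℕ, (∀ i, ∃ v ∈ phi e i, v ∈ Iset) →
        u₃ e ∈ Iset ∧ Hset (u₃ e) = {x | ∃ i, ∃ v ∈ phi e i, x ∈ Hset v}) := by
  obtain ⟨u, hu, huH⟩ := exists_computable_compl
  obtain ⟨U, hU, hUH⟩ := exists_computable_iUnion
  exact ⟨Nat.pair 0, u, U, (Primrec₂.natPair.comp (Primrec.const 0) Primrec.id).to_comp, hu, hU,
    fun i => ⟨pair_zero_mem_Iset i, Hset_pair_zero i⟩, huH,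
    fun e he => ⟨(hUH e).2 he, (hUH e).1⟩⟩
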